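/- arXiv:1406.7065 — 14 statements merged into one kernel-verified Lean document; each statement's English description precedes it below -/
import Mathlib

section
/- Let S be an integral domain, G a finite group acting on S by ring automorphisms, and f: G × G → S \ {0} a normalized 2-cocycle with values in the nonzero elements of S. Let U(S) denote the units of S. Then H = {σ ∈ G | f(σ,σ⁻¹) ∈ U(S)} is a subgroup of G. -/
/-- `H = {σ ∈ G | f(σ,σ⁻¹) ∈ U(S)}` is a subgroup of `G`. -/
theorem H_is_subgroup {S : Type*} [CommRing S] [IsDomain S] {G : Type*} [Group G] [Finite G]
    [MulSemiringAction G S] (f : G → G → S)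
    (hne : ∀ σ τ : G, f σ τ ≠ 0)
    (hnorm₁ : ∀ σ : G, f 1 σ = 1) (hnorm₂ : ∀ σ : G, f σ 1 = 1)
    (hcoc : ∀ σ τ γ : G, f σ τ * f (σ * τ) γ = (σ • f τ γ) * f σ (τ * γ)) :
    ∃ H : Subgroup G, ∀ σ : G, σ ∈ H ↔ IsUnit (f σ σ⁻¹) := by
  have hact : ∀ (σ : G) (x : S), IsUnit (σ • x) ↔ IsUnit x := by
    intro σ x
    constructor
    · intro h
      have := h.map (MulSemiringAction.toRingHom G S σ⁻¹)
      simpa [smul_smul] using this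
    · intro h
      exact h.map (MulSemiringAction.toRingHom G S σ)
  have key : ∀ σ : G, IsUnit (f σ σ⁻¹) → ∀ τ : G, IsUnit (f σ τ) := by
    intro σ hσ τ
    have h := hcoc σ σ⁻¹ (σ * τ)
    simp only [mul_inv_cancel, hnorm₁, mul_one, inv_mul_cancel_left] at h
    rw [h] at hσ
    exact isUnit_of_mul_isUnit_right hσ
  refine ⟨{ carrier := {σ | IsUnit (f σ σ⁻¹)}
            one_mem' := by simp [hnorm₁]
            mul_mem' := ?_
            inv_mem' := ?_ }, fun σ => Iff.rfl⟩
  · intro a b ha hb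
    have h := hcoc a b (a * b)⁻¹
    have hb' : b * (a * b)⁻¹ = a⁻¹ := by group
    rw [hb'] at h
    have hr : IsUnit ((a • f b (a * b)⁻¹) * f a a⁻¹) :=
      ((hact a _).2 (key b hb (a * b)⁻¹)).mul ha
    rw [← h] at hr
    exact isUnit_of_mul_isUnit_right hr
  · intro a ha
    have h := hcoc a a⁻¹ a
    rw [mul_inv_cancel, hnorm₁, mul_one, inv_mul_cancel, hnorm₂, mul_one] at h
    have : IsUnit (f a⁻¹ a) := (hact a _).1 (h ▸ ha)
    simpa using this
end

section
/- With S, G, f as above and H = {σ ∈ G | f(σ,σ⁻¹) ∈ U(S)}: if h ∈ H, then f(h,σ) ∈ U(S) and f(σ,h) ∈ U(S) for every σ ∈ G. -/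
/-- If `h ∈ H`, i.e. `f(h,h⁻¹)` is a unit, then `f(h,σ)` and `f(σ,h)` are units for all `σ`. -/
theorem unit_values_of_mem_H {S : Type*} [CommRing S] [IsDomain S] {G : Type*} [Group G]
    [Finite G] [MulSemiringAction G S] (f : G → G → S)
    (hne : ∀ σ τ : G, f σ τ ≠ 0)
    (hnorm₁ : ∀ σ : G, f 1 σ = 1) (hnorm₂ : ∀ σ : G, f σ 1 = 1)
    (hcoc : ∀ σ τ γ : G, f σ τ * f (σ * τ) γ = (σ • f τ γ) * f σ (τ * γ))
    (h : G) (hh : IsUnit (f h h⁻¹)) :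
    ∀ σ : G, IsUnit (f h σ) ∧ IsUnit (f σ h) := by
  intro σ
  constructor
  · -- use cocycle with (h, h⁻¹, h*σ)
    have key := hcoc h h⁻¹ (h * σ)
    rw [mul_inv_cancel, hnorm₁, mul_one, inv_mul_cancel_left] at key
    have : IsUnit ((h • f h⁻¹ (h * σ)) * f h σ) := key ▸ hh
    exact isUnit_of_mul_isUnit_right this
  · -- use cocycle with (σ, h, h⁻¹)
    have key := hcoc σ h h⁻¹
    rw [mul_inv_cancel, hnorm₂, mul_one] at key
    have hu : IsUnit (σ • f h h⁻¹) :=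
      hh.map (MulSemiringAction.toRingHom G S σ)
    exact isUnit_of_mul_isUnit_left (key ▸ hu)
end

section
/- With S, G, f, H as above, the relation on the left coset space G/H defined by σH ≤ τH iff f(σ,σ⁻¹τ) ∈ U(S) is well-defined (independent of coset representatives) and is a partial order on G/H with least element H. -/
/-!
Specialising the cocycle identity to the triple `(σ, σ⁻¹τ, τ⁻¹γ)` gives
`f(σ,σ⁻¹τ) f(τ,τ⁻¹γ) = σ(f(σ⁻¹τ,τ⁻¹γ)) f(σ,σ⁻¹γ)`. Since a product in a commutative ring is a
unit iff both factors are, and ring automorphisms preserve units, this yields transitivity directly,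
and for `γ = σ` (where `f(σ,1) = 1`) it shows that `σ ≤ τ ≤ σ` holds iff `σ⁻¹τ ∈ H`. That is
antisymmetry, and it also makes every element equivalent to each representative of its coset, so
well-definedness follows from transitivity.
-/

namespace MulSemiringAction

variable {S G : Type*} [CommRing S] [Group G] [MulSemiringAction G S]

theorem isUnit_smul_iff (σ : G) (x : S) : IsUnit (σ • x) ↔ IsUnit x :=
  isUnit_map_iff (toRingEquiv G S σ) x

end MulSemiringAction

section Cocycle

variable {S G : Type*} [CommRing S] [Group G] [MulSemiringAction G S] {f : G → G → S}

theorem cocycle_mul_inv_mul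
    (hcoc : ∀ σ τ γ : G, f σ τ * f (σ * τ) γ = (σ • f τ γ) * f σ (τ * γ)) (σ τ γ : G) :
    f σ (σ⁻¹ * τ) * f τ (τ⁻¹ * γ) = (σ • f (σ⁻¹ * τ) (τ⁻¹ * γ)) * f σ (σ⁻¹ * γ) := by
  simpa only [mul_assoc, mul_inv_cancel_left] using hcoc σ (σ⁻¹ * τ) (τ⁻¹ * γ)

theorem isUnit_cocycle_trans
    (hcoc : ∀ σ τ γ : G, f σ τ * f (σ * τ) γ = (σ • f τ γ) * f σ (τ * γ)) {σ τ γ : G}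
    (hστ : IsUnit (f σ (σ⁻¹ * τ))) (hτγ : IsUnit (f τ (τ⁻¹ * γ))) :
    IsUnit (f σ (σ⁻¹ * γ)) := by
  have h := hστ.mul hτγ
  rw [cocycle_mul_inv_mul hcoc] at h
  exact isUnit_of_mul_isUnit_right h

theorem isUnit_cocycle_and_iff
    (hcoc : ∀ σ τ γ : G, f σ τ * f (σ * τ) γ = (σ • f τ γ) * f σ (τ * γ))
    (hnorm : ∀ σ : G, f σ 1 = 1) (σ τ : G) :
    IsUnit (f σ (σ⁻¹ * τ)) ∧ IsUnit (f τ (τ⁻¹ * σ)) ↔ IsUnit (f (σ⁻¹ * τ) (σ⁻¹ * τ)⁻¹) := by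
  have h := cocycle_mul_inv_mul hcoc σ τ σ
  rw [inv_mul_cancel, hnorm, mul_one] at h
  rw [← IsUnit.mul_iff, h, MulSemiringAction.isUnit_smul_iff, mul_inv_rev, inv_inv]

theorem isUnit_cocycle_iff_of_mem_coset
    (hcoc : ∀ σ τ γ : G, f σ τ * f (σ * τ) γ = (σ • f τ γ) * f σ (τ * γ))
    (hnorm : ∀ σ : G, f σ 1 = 1) {σ σ' τ τ' : G}
    (hσ : IsUnit (f (σ⁻¹ * σ') (σ⁻¹ * σ')⁻¹)) (hτ : IsUnit (f (τ⁻¹ * τ') (τ⁻¹ * τ')⁻¹)) :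
    IsUnit (f σ (σ⁻¹ * τ)) ↔ IsUnit (f σ' (σ'⁻¹ * τ')) := by
  obtain ⟨hσσ', hσ'σ⟩ := (isUnit_cocycle_and_iff hcoc hnorm σ σ').2 hσ
  obtain ⟨hττ', hτ'τ⟩ := (isUnit_cocycle_and_iff hcoc hnorm τ τ').2 hτ
  exact ⟨fun h => isUnit_cocycle_trans hcoc hσ'σ (isUnit_cocycle_trans hcoc h hττ'),
    fun h => isUnit_cocycle_trans hcoc hσσ' (isUnit_cocycle_trans hcoc h hτ'τ)⟩

end Cocycle

theorem graph_partial_order_general {S : Type*} [CommRing S] {G : Type*} [Group G]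
    [MulSemiringAction G S] (f : G → G → S)
    (hnorm₁ : ∀ σ : G, f 1 σ = 1) (hnorm₂ : ∀ σ : G, f σ 1 = 1)
    (hcoc : ∀ σ τ γ : G, f σ τ * f (σ * τ) γ = (σ • f τ γ) * f σ (τ * γ)) :
    -- well-definedness: the relation only depends on the left cosets modulo H
    (∀ σ σ' τ τ' : G, IsUnit (f (σ⁻¹ * σ') (σ⁻¹ * σ')⁻¹) →
      IsUnit (f (τ⁻¹ * τ') (τ⁻¹ * τ')⁻¹) →
      (IsUnit (f σ (σ⁻¹ * τ)) ↔ IsUnit (f σ' (σ'⁻¹ * τ')))) ∧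
    -- reflexivity
    (∀ σ : G, IsUnit (f σ (σ⁻¹ * σ))) ∧
    -- transitivity
    (∀ σ τ γ : G, IsUnit (f σ (σ⁻¹ * τ)) → IsUnit (f τ (τ⁻¹ * γ)) →
      IsUnit (f σ (σ⁻¹ * γ))) ∧
    -- antisymmetry (modulo H: equal cosets)
    (∀ σ τ : G, IsUnit (f σ (σ⁻¹ * τ)) → IsUnit (f τ (τ⁻¹ * σ)) →
      IsUnit (f (σ⁻¹ * τ) (σ⁻¹ * τ)⁻¹)) ∧
    -- H is the least element
    (∀ σ : G, IsUnit (f 1 (1⁻¹ * σ))) :=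
  ⟨fun _ _ _ _ hσ hτ => isUnit_cocycle_iff_of_mem_coset hcoc hnorm₂ hσ hτ,
    fun σ => by simp only [inv_mul_cancel, hnorm₂, isUnit_one],
    fun _ _ _ => isUnit_cocycle_trans hcoc,
    fun σ τ hστ hτσ => (isUnit_cocycle_and_iff hcoc hnorm₂ σ τ).1 ⟨hστ, hτσ⟩,
    fun σ => by simp only [hnorm₁, isUnit_one]⟩

/-- The relation `σH ≤ τH ↔ f(σ,σ⁻¹τ) ∈ U(S)` on the left coset space `G/H`
(where `H = {σ | f(σ,σ⁻¹) ∈ U(S)}`) is well defined and is a partial order with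
least element `H`. -/
theorem graph_partial_order {S : Type*} [CommRing S] [IsDomain S] {G : Type*} [Group G]
    [Finite G] [MulSemiringAction G S] (f : G → G → S)
    (hne : ∀ σ τ : G, f σ τ ≠ 0)
    (hnorm₁ : ∀ σ : G, f 1 σ = 1) (hnorm₂ : ∀ σ : G, f σ 1 = 1)
    (hcoc : ∀ σ τ γ : G, f σ τ * f (σ * τ) γ = (σ • f τ γ) * f σ (τ * γ)) :
    -- well-definedness: the relation only depends on the left cosets modulo H
    (∀ σ σ' τ τ' : G, IsUnit (f (σ⁻¹ * σ') (σ⁻¹ * σ')⁻¹) →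
      IsUnit (f (τ⁻¹ * τ') (τ⁻¹ * τ')⁻¹) →
      (IsUnit (f σ (σ⁻¹ * τ)) ↔ IsUnit (f σ' (σ'⁻¹ * τ')))) ∧
    -- reflexivity
    (∀ σ : G, IsUnit (f σ (σ⁻¹ * σ))) ∧
    -- transitivity
    (∀ σ τ γ : G, IsUnit (f σ (σ⁻¹ * τ)) → IsUnit (f τ (τ⁻¹ * γ)) →
      IsUnit (f σ (σ⁻¹ * γ))) ∧
    -- antisymmetry (modulo H: equal cosets)
    (∀ σ τ : G, IsUnit (f σ (σ⁻¹ * τ)) → IsUnit (f τ (τ⁻¹ * σ)) →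
      IsUnit (f (σ⁻¹ * τ) (σ⁻¹ * τ)⁻¹)) ∧
    -- H is the least element
    (∀ σ : G, IsUnit (f 1 (1⁻¹ * σ))) :=
  graph_partial_order_general f hnorm₁ hnorm₂ hcoc
end

section
/- The partial order ≤ on G/H defined by σH ≤ τH iff f(σ,σ⁻¹τ) ∈ U(S) is lower subtractive: whenever σH ≤ τH, one has (σH ≤ γH and γH ≤ τH) if and only if σ⁻¹γH ≤ σ⁻¹τH. -/
/-- The partial order on `G/H` given by `σH ≤ τH ↔ f(σ,σ⁻¹τ) ∈ U(S)` is lower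
subtractive: if `σH ≤ τH` then (`σH ≤ γH ≤ τH` iff `σ⁻¹γH ≤ σ⁻¹τH`). -/
theorem graph_lower_subtractive {S : Type*} [CommRing S] [IsDomain S] {G : Type*} [Group G]
    [Finite G] [MulSemiringAction G S] (f : G → G → S)
    (hne : ∀ σ τ : G, f σ τ ≠ 0)
    (hnorm₁ : ∀ σ : G, f 1 σ = 1) (hnorm₂ : ∀ σ : G, f σ 1 = 1)
    (hcoc : ∀ σ τ γ : G, f σ τ * f (σ * τ) γ = (σ • f τ γ) * f σ (τ * γ)) :
    ∀ σ τ γ : G, IsUnit (f σ (σ⁻¹ * τ)) →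
      ((IsUnit (f σ (σ⁻¹ * γ)) ∧ IsUnit (f γ (γ⁻¹ * τ))) ↔
        IsUnit (f (σ⁻¹ * γ) ((σ⁻¹ * γ)⁻¹ * (σ⁻¹ * τ)))) := by
  intro σ τ γ hστ
  have harg : (σ⁻¹ * γ)⁻¹ * (σ⁻¹ * τ) = γ⁻¹ * τ := by group
  have key := hcoc σ (σ⁻¹ * γ) (γ⁻¹ * τ)
  have h1 : σ * (σ⁻¹ * γ) = γ := by group
  have h2 : σ⁻¹ * γ * (γ⁻¹ * τ) = σ⁻¹ * τ := by group
  rw [h1, h2] at key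
  rw [harg]
  have hsm : ∀ x : S, IsUnit (σ • x) ↔ IsUnit x := fun x => by
    constructor
    · intro h
      have := h.map (MulSemiringAction.toRingEquiv G S σ⁻¹).toRingHom
      simpa [MulSemiringAction.toRingEquiv, smul_smul] using this
    · intro h
      exact h.map (MulSemiringAction.toRingEquiv G S σ).toRingHom
  constructor
  · rintro ⟨ha, hb⟩
    have hprod : IsUnit ((σ • f (σ⁻¹ * γ) (γ⁻¹ * τ)) * f σ (σ⁻¹ * τ)) := key ▸ ha.mul hb
    have hs : IsUnit (σ • f (σ⁻¹ * γ) (γ⁻¹ * τ)) := isUnit_of_mul_isUnit_left hprod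
    exact (hsm _).mp hs
  · intro hx
    have hprod : IsUnit (f σ (σ⁻¹ * γ) * f γ (γ⁻¹ * τ)) := by
      rw [key]; exact ((hsm _).mpr hx).mul hστ
    exact ⟨isUnit_of_mul_isUnit_left hprod,
      isUnit_of_mul_isUnit_right hprod⟩
end

section
/- Let M be a prime ideal of S. The relation on G/H defined by σH ≤_M τH iff f(σ,σ⁻¹τ) ∉ M is a well-defined preorder on G/H. -/
section Aux

set_option linter.unusedSectionVars false

variable {S : Type*} [CommRing S] [IsDomain S] {G : Type*} [Group G]
    [MulSemiringAction G S] (f : G → G → S)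

private lemma aux_unit_smul (g : G) {s : S} (hs : IsUnit s) : IsUnit (g • s) :=
  hs.map (MulSemiringAction.toRingHom G S g)

private lemma aux_unit_right
    (hnorm₂ : ∀ σ : G, f σ 1 = 1)
    (hcoc : ∀ σ τ γ : G, f σ τ * f (σ * τ) γ = (σ • f τ γ) * f σ (τ * γ))
    {h : G} (hh : IsUnit (f h h⁻¹)) (x : G) : IsUnit (f x h) := by
  have := hcoc x h h⁻¹
  rw [mul_inv_cancel, hnorm₂, mul_one] at this
  exact isUnit_of_mul_isUnit_left (this ▸ aux_unit_smul x hh)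

private lemma aux_unit_left
    (hnorm₁ : ∀ σ : G, f 1 σ = 1)
    (hcoc : ∀ σ τ γ : G, f σ τ * f (σ * τ) γ = (σ • f τ γ) * f σ (τ * γ))
    {h : G} (hh : IsUnit (f h h⁻¹)) (x : G) : IsUnit (f h x) := by
  have := hcoc h h⁻¹ (h * x)
  rw [mul_inv_cancel, hnorm₁, mul_one, inv_mul_cancel_left] at this
  exact isUnit_of_mul_isUnit_right (this ▸ hh)

private lemma aux_step {M : Ideal S} (hM : M.IsPrime) {a b c d : S}
    (hb : IsUnit b) (hc : IsUnit c) (e : a * b = c * d) : a ∉ M ↔ d ∉ M := by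
  have hbM : b ∉ M := fun hmem => hM.ne_top (M.eq_top_of_isUnit_mem hmem hb)
  have hcM : c ∉ M := fun hmem => hM.ne_top (M.eq_top_of_isUnit_mem hmem hc)
  constructor
  · intro ha hd
    have hcd : a * b ∈ M := by rw [e]; exact M.mul_mem_left c hd
    exact (hM.mem_or_mem hcd).elim ha hbM
  · intro hd ha
    have hcd : c * d ∈ M := by rw [← e]; exact M.mul_mem_right b ha
    exact (hM.mem_or_mem hcd).elim hcM hd

end Aux

/-- For a prime ideal `M` of `S`, the relation `σH ≤_M τH ↔ f(σ,σ⁻¹τ) ∉ M` is a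
well-defined preorder (reflexive and transitive) on `G/H`. -/
theorem graph_M_preorder {S : Type*} [CommRing S] [IsDomain S] {G : Type*} [Group G]
    [Finite G] [MulSemiringAction G S] (f : G → G → S)
    (hne : ∀ σ τ : G, f σ τ ≠ 0)
    (hnorm₁ : ∀ σ : G, f 1 σ = 1) (hnorm₂ : ∀ σ : G, f σ 1 = 1)
    (hcoc : ∀ σ τ γ : G, f σ τ * f (σ * τ) γ = (σ • f τ γ) * f σ (τ * γ))
    (M : Ideal S) (hM : M.IsPrime) :
    -- well-definedness: the relation only depends on the left cosets modulo H
    (∀ σ σ' τ τ' : G, IsUnit (f (σ⁻¹ * σ') (σ⁻¹ * σ')⁻¹) →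
      IsUnit (f (τ⁻¹ * τ') (τ⁻¹ * τ')⁻¹) →
      (f σ (σ⁻¹ * τ) ∉ M ↔ f σ' (σ'⁻¹ * τ') ∉ M)) ∧
    -- reflexivity
    (∀ σ : G, f σ (σ⁻¹ * σ) ∉ M) ∧
    -- transitivity
    (∀ σ τ γ : G, f σ (σ⁻¹ * τ) ∉ M → f τ (τ⁻¹ * γ) ∉ M → f σ (σ⁻¹ * γ) ∉ M) := by
  refine ⟨?_, ?_, ?_⟩
  · intro σ σ' τ τ' hσ hτ
    -- step 1 : change σ to σ'
    have e1 := hcoc σ (σ⁻¹ * σ') ((σ⁻¹ * σ')⁻¹ * (σ⁻¹ * τ))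
    rw [mul_inv_cancel_left, mul_inv_cancel_left,
      show (σ⁻¹ * σ')⁻¹ * (σ⁻¹ * τ) = σ'⁻¹ * τ by group, mul_comm (f σ (σ⁻¹ * σ'))] at e1
    have h1 : f σ (σ⁻¹ * τ) ∉ M ↔ f σ' (σ'⁻¹ * τ) ∉ M := by
      have hb : IsUnit (f σ (σ⁻¹ * σ')) := aux_unit_right f hnorm₂ hcoc hσ σ
      have hc : IsUnit (σ • f (σ⁻¹ * σ') (σ'⁻¹ * τ)) :=
        aux_unit_smul σ (aux_unit_left f hnorm₁ hcoc hσ _)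
      exact (aux_step hM hb hc e1).symm
    -- step 2 : change τ to τ'
    have e2 := hcoc σ' (σ'⁻¹ * τ) (τ⁻¹ * τ')
    rw [mul_inv_cancel_left, show (σ'⁻¹ * τ) * (τ⁻¹ * τ') = σ'⁻¹ * τ' by group] at e2
    have h2 : f σ' (σ'⁻¹ * τ) ∉ M ↔ f σ' (σ'⁻¹ * τ') ∉ M := by
      have hb : IsUnit (f τ (τ⁻¹ * τ')) := aux_unit_right f hnorm₂ hcoc hτ τ
      have hc : IsUnit (σ' • f (σ'⁻¹ * τ) (τ⁻¹ * τ')) :=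
        aux_unit_smul σ' (aux_unit_right f hnorm₂ hcoc hτ _)
      exact aux_step hM hb hc e2
    exact h1.trans h2
  · intro σ
    rw [inv_mul_cancel, hnorm₂ σ]
    exact fun h1 => hM.ne_top (M.eq_top_of_isUnit_mem h1 isUnit_one)
  · intro σ τ γ h1 h2
    have e := hcoc σ (σ⁻¹ * τ) (τ⁻¹ * γ)
    rw [mul_inv_cancel_left, show (σ⁻¹ * τ) * (τ⁻¹ * γ) = σ⁻¹ * γ by group] at e
    intro hmem
    have : f σ (σ⁻¹ * τ) * f τ (τ⁻¹ * γ) ∈ M := e ▸ M.mul_mem_left _ hmem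
    exact (hM.mem_or_mem this).elim h1 h2
end

section
/- Let v be a valuation on the field K (of fractions of S) with valuation ring containing the image of f, corresponding to a maximal ideal M of S. If σH ≤_M τH (i.e. f(σ,σ⁻¹τ) ∉ M, equivalently v(f(σ,σ⁻¹τ))=0), then v(f(σ,σ⁻¹)) ≤ v(f(τ,τ⁻¹)). -/
/-- If `σH ≤_M τH`, i.e. `v(f(σ,σ⁻¹τ)) = 0` additively (`= 1` for a multiplicative
valuation), then `v(f(σ,σ⁻¹)) ≤ v(f(τ,τ⁻¹))` additively, i.e.
`v(f(τ,τ⁻¹)) ≤ v(f(σ,σ⁻¹))` for the multiplicative valuation `v`. -/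
theorem value_le_of_graph_le {K : Type*} [Field K] {Γ : Type*}
    [LinearOrderedCommGroupWithZero Γ] (v : Valuation K Γ)
    {G : Type*} [Group G] [Finite G] [MulSemiringAction G K] (f : G → G → K)
    (hne : ∀ σ τ : G, f σ τ ≠ 0)
    (hnorm₁ : ∀ σ : G, f 1 σ = 1) (hnorm₂ : ∀ σ : G, f σ 1 = 1)
    (hcoc : ∀ σ τ γ : G, f σ τ * f (σ * τ) γ = (σ • f τ γ) * f σ (τ * γ))
    -- the values of `f`, and their Galois conjugates, lie in the valuation ring of `v`
    (hval : ∀ σ τ : G, v (f σ τ) ≤ 1)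
    (hval' : ∀ ρ σ τ : G, v (ρ • f σ τ) ≤ 1)
    (σ τ : G) (hle : v (f σ (σ⁻¹ * τ)) = 1) :
    v (f τ τ⁻¹) ≤ v (f σ σ⁻¹) := by
  have h := hcoc σ (σ⁻¹ * τ) τ⁻¹
  rw [mul_inv_cancel_left, mul_inv_cancel_right] at h
  calc v (f τ τ⁻¹) = v (f σ (σ⁻¹ * τ)) * v (f τ τ⁻¹) := by rw [hle, one_mul]
    _ = v (σ • f (σ⁻¹ * τ) τ⁻¹) * v (f σ σ⁻¹) := by rw [← map_mul, ← map_mul, h]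
    _ ≤ 1 * v (f σ σ⁻¹) := mul_le_mul_left (hval' _ _ _) _
    _ = v (f σ σ⁻¹) := one_mul _
end

section
/- With notation as above: I_σ ⊆ J(S) if and only if σ ∈ H (i.e. f(σ,σ⁻¹) ∈ U(S)), and in that case I_σ = J(S). -/
/-- `I_σ ⊆ J(S)` iff `σ ∈ H` (i.e. `f(σ,σ⁻¹) ∈ U(S)`), and in that case `I_σ = J(S)`.
(Here `S` has finitely many maximal ideals.) -/
theorem I_sigma_sub_jacobson_iff {S : Type*} [CommRing S] [IsDomain S] {G : Type*} [Group G]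
    [Finite G] [MulSemiringAction G S] (f : G → G → S)
    (hne : ∀ σ τ : G, f σ τ ≠ 0)
    (hnorm₁ : ∀ σ : G, f 1 σ = 1) (hnorm₂ : ∀ σ : G, f σ 1 = 1)
    (hcoc : ∀ σ τ γ : G, f σ τ * f (σ * τ) γ = (σ • f τ γ) * f σ (τ * γ))
    (hfin : {M : Ideal S | M.IsMaximal}.Finite) (σ : G) :
    (sInf {M : Ideal S | M.IsMaximal ∧ f σ σ⁻¹ ∉ M} ≤ (⊥ : Ideal S).jacobson ↔
      IsUnit (f σ σ⁻¹)) ∧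
    (IsUnit (f σ σ⁻¹) →
      sInf {M : Ideal S | M.IsMaximal ∧ f σ σ⁻¹ ∉ M} = (⊥ : Ideal S).jacobson) := by
  have hunit : IsUnit (f σ σ⁻¹) →
      sInf {M : Ideal S | M.IsMaximal ∧ f σ σ⁻¹ ∉ M} = (⊥ : Ideal S).jacobson := by
    intro hu
    have hset : {M : Ideal S | M.IsMaximal ∧ f σ σ⁻¹ ∉ M} = {M : Ideal S | M.IsMaximal} := by
      ext M
      simp only [Set.mem_setOf_eq, and_iff_left_iff_imp]
      intro hM hmem
      exact hM.ne_top (M.eq_top_of_isUnit_mem hmem hu)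
    rw [hset, Ideal.jacobson]
    congr 1
    ext M
    simp
  refine ⟨⟨fun hle => ?_, fun hu => le_of_eq (hunit hu)⟩, hunit⟩
  by_contra hnu
  -- f σ σ⁻¹ is in some maximal ideal M₀
  obtain ⟨M₀, hM₀max, hM₀⟩ := Ideal.exists_le_maximal (Ideal.span {f σ σ⁻¹})
    (by rwa [Ne, Ideal.span_singleton_eq_top])
  have hmem : f σ σ⁻¹ ∈ M₀ := hM₀ (Ideal.subset_span rfl)
  set P := {M : Ideal S | M.IsMaximal ∧ f σ σ⁻¹ ∉ M} with hP
  have hPfin : P.Finite := hfin.subset fun M hM => hM.1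
  have hle' : sInf P ≤ M₀ := hle.trans (sInf_le_of_le ⟨bot_le, hM₀max⟩ le_rfl)
  have hinf : hPfin.toFinset.inf id ≤ M₀ := by
    calc hPfin.toFinset.inf id = sInf ↑hPfin.toFinset := Finset.inf_id_eq_sInf _
      _ = sInf P := by rw [hPfin.coe_toFinset]
      _ ≤ M₀ := hle'
  obtain ⟨M, hMmem, hMle⟩ := hM₀max.isPrime.inf_le'.mp hinf
  rw [Set.Finite.mem_toFinset] at hMmem
  have hMeq : M = M₀ := hMmem.1.eq_of_le hM₀max.ne_top hMle
  exact hMmem.2 (by rw [hMeq]; exact hmem)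
end

section
/- Suppose f(σ,σ⁻¹) ∉ M² for every σ ∈ G and every maximal ideal M of S, where S is the integral closure of a valuation ring V in K and S has Jacobson radical J(S). Then I_σ · f(σ,σ⁻¹) = J(S) for every σ ∈ G. -/
/-- If `f(σ,σ⁻¹) ∉ M²` for every `σ ∈ G` and every maximal ideal `M` of `S`, then
`I_σ · f(σ,σ⁻¹) = J(S)` for every `σ ∈ G`. (`S` is a Bézout domain with finitely many
maximal ideals, as is the integral closure of a valuation ring in a finite Galois
extension of its quotient field.) -/
theorem I_sigma_mul_f {S : Type*} [CommRing S] [IsDomain S] [IsBezout S] {G : Type*}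
    [Group G] [Finite G] [MulSemiringAction G S] (f : G → G → S)
    (hne : ∀ σ τ : G, f σ τ ≠ 0)
    (hnorm₁ : ∀ σ : G, f 1 σ = 1) (hnorm₂ : ∀ σ : G, f σ 1 = 1)
    (hcoc : ∀ σ τ γ : G, f σ τ * f (σ * τ) γ = (σ • f τ γ) * f σ (τ * γ))
    (hfin : {M : Ideal S | M.IsMaximal}.Finite)
    (hsq : ∀ M : Ideal S, M.IsMaximal → ∀ σ : G, f σ σ⁻¹ ∉ M ^ 2) :
    ∀ σ : G, sInf {M : Ideal S | M.IsMaximal ∧ f σ σ⁻¹ ∉ M} * Ideal.span {f σ σ⁻¹} =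
      (⊥ : Ideal S).jacobson := by
  intro σ
  set a : S := f σ σ⁻¹ with ha
  have ha0 : a ≠ 0 := hne σ σ⁻¹
  apply le_antisymm
  · rw [Ideal.mul_le]
    intro i hi x hx
    rw [Ideal.mem_span_singleton] at hx
    obtain ⟨c, rfl⟩ := hx
    rw [Ideal.jacobson, Ideal.mem_sInf]
    rintro M ⟨-, hM⟩
    by_cases haM : a ∈ M
    · exact M.mul_mem_left _ (M.mul_mem_right c haM)
    · exact M.mul_mem_right _ ((Ideal.mem_sInf.mp hi) ⟨hM, haM⟩)
  · intro y hy
    have hyM : ∀ M : Ideal S, M.IsMaximal → y ∈ M := by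
      intro M hM
      rw [Ideal.jacobson, Ideal.mem_sInf] at hy
      exact hy ⟨bot_le, hM⟩
    -- First show a ∣ y.
    set d : S := IsBezout.gcd a y with hdd
    obtain ⟨u, hu⟩ : d ∣ a := IsBezout.gcd_dvd_left a y
    obtain ⟨w, hw⟩ : d ∣ y := IsBezout.gcd_dvd_right a y
    have hd0 : d ≠ 0 := by
      intro h; apply ha0; rw [hu, h, zero_mul]
    have hdmem : d ∈ Ideal.span ({a, y} : Set S) := by
      rw [← IsBezout.span_gcd a y]
      exact Ideal.mem_span_singleton_self d
    rw [Ideal.mem_span_pair] at hdmem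
    obtain ⟨r, s, hrs⟩ := hdmem
    have hunit : IsUnit u := by
      by_contra hnu
      obtain ⟨M, hM, huM⟩ := exists_max_ideal_of_mem_nonunits hnu
      have haM : a ∈ M := by rw [hu]; exact M.mul_mem_left d huM
      have hyMm : y ∈ M := hyM M hM
      have hone : r * u + s * w = 1 := by
        have : d * (r * u + s * w) = d * 1 := by
          linear_combination hrs - r * hu - s * hw
        exact mul_left_cancel₀ hd0 this
      have hwM : w ∉ M := by
        intro hwM
        have : (1 : S) ∈ M := by
          rw [← hone]
          exact M.add_mem (M.mul_mem_left r huM) (M.mul_mem_left s hwM)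
        exact hM.ne_top ((Ideal.eq_top_iff_one M).mpr this)
      have hdM : d ∈ M := by
        rcases hM.isPrime.mem_or_mem (hw ▸ hyMm) with h | h
        · exact h
        · exact absurd h hwM
      apply hsq M hM σ
      rw [← ha, hu, sq]
      exact Ideal.mul_mem_mul hdM huM
    -- a ∣ d ∣ y, so y = a * z
    obtain ⟨v, hv⟩ := hunit.exists_right_inv
    have hady : a ∣ y := ⟨v * w, by rw [hw, hu]; linear_combination (-(d*w)) * hv⟩
    obtain ⟨z, hz⟩ := hady
    have hzI : z ∈ sInf {M : Ideal S | M.IsMaximal ∧ a ∉ M} := by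
      rw [Ideal.mem_sInf]
      rintro M ⟨hM, haM⟩
      rcases hM.isPrime.mem_or_mem (hz ▸ hyM M hM) with h | h
      · exact absurd h haM
      · exact h
    rw [hz, mul_comm a z]
    exact Ideal.mul_mem_mul hzI (Ideal.mem_span_singleton_self a)
end

section
/- Suppose that for every σ,τ ∈ G and every maximal ideal M of S, f(σ,τ) ∉ M². Then for each maximal ideal M of S, the preorder ≤_M on G/H is total: for all σ, τ ∈ G, σH ≤_M τH or τH ≤_M σH. -/
/-- If `f(σ,τ) ∉ M²` for all `σ,τ ∈ G` and all maximal ideals `M`, then for each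
maximal ideal `M` the preorder `≤_M` on `G/H` is total. -/
theorem graph_M_total {S : Type*} [CommRing S] [IsDomain S] {G : Type*} [Group G]
    [Finite G] [MulSemiringAction G S] (f : G → G → S)
    (hne : ∀ σ τ : G, f σ τ ≠ 0)
    (hnorm₁ : ∀ σ : G, f 1 σ = 1) (hnorm₂ : ∀ σ : G, f σ 1 = 1)
    (hcoc : ∀ σ τ γ : G, f σ τ * f (σ * τ) γ = (σ • f τ γ) * f σ (τ * γ))
    (hsq : ∀ M : Ideal S, M.IsMaximal → ∀ σ τ : G, f σ τ ∉ M ^ 2) :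
    ∀ M : Ideal S, M.IsMaximal →
      ∀ σ τ : G, f σ (σ⁻¹ * τ) ∉ M ∨ f τ (τ⁻¹ * σ) ∉ M := by
  intro M hM σ τ
  by_contra h
  push_neg at h
  obtain ⟨h1, h2⟩ := h
  -- cocycle identity
  have key := hcoc σ (σ⁻¹ * τ) (τ⁻¹ * σ)
  rw [mul_inv_cancel_left] at key
  have hone : σ⁻¹ * τ * (τ⁻¹ * σ) = 1 := by group
  rw [hone, hnorm₂, mul_one] at key
  -- the product lies in M^2
  have hmem : f σ (σ⁻¹ * τ) * f τ (τ⁻¹ * σ) ∈ M ^ 2 := by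
    rw [pow_two]
    exact Ideal.mul_mem_mul h1 h2
  rw [key] at hmem
  -- transport along the ring automorphism given by σ
  set e : S ≃+* S := MulSemiringAction.toRingEquiv G S σ with he
  have hM' : (M.comap (e : S →+* S)).IsMaximal :=
    Ideal.comap_isMaximal_of_surjective _ e.surjective
  apply hsq _ hM' (σ⁻¹ * τ) (τ⁻¹ * σ)
  have hcomap : (M.comap (e : S →+* S)) ^ 2 = (M ^ 2).comap (e : S →+* S) := by
    have hme : ∀ I : Ideal S, Ideal.comap (e : S →+* S) I = Ideal.map (e.symm : S →+* S) I := by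
      intro I
      rw [Ideal.map_comap_of_equiv e.symm, RingEquiv.symm_symm, Ideal.comap_coe]
    rw [pow_two, pow_two, hme, hme, ← Ideal.map_mul]
  rw [hcomap, Ideal.mem_comap]
  exact hmem
end

section
/- With A_f as above and I_σ = ⋂{M maximal ideal of S : f(σ,σ⁻¹) ∉ M}, the S-submodule ∑_{σ∈G} I_σ x_σ is a two-sided ideal of A_f. -/
/-- `∑_{σ∈G} I_σ x_σ` is a two-sided ideal of the crossed-product order
`A_f = ⊕_{σ∈G} S x_σ`, where `I_σ = ⋂{M maximal : f(σ,σ⁻¹) ∉ M}`. The order is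
presented abstractly as a ring `A` with free `S`-basis `x : G → A` satisfying the
crossed-product relations; the conclusion asserts the existence of an additive
subgroup with the stated elements, closed under left and right multiplication
by arbitrary elements of `A`. -/
theorem I_sigma_sum_is_ideal {S : Type*} [CommRing S] [IsDomain S] {G : Type*}
    [Group G] [Fintype G] [MulSemiringAction G S] (f : G → G → S)
    (hne : ∀ σ τ : G, f σ τ ≠ 0)
    (hnorm₁ : ∀ σ : G, f 1 σ = 1) (hnorm₂ : ∀ σ : G, f σ 1 = 1)
    (hcoc : ∀ σ τ γ : G, f σ τ * f (σ * τ) γ = (σ • f τ γ) * f σ (τ * γ))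
    {A : Type*} [Ring A] (ι : S →+* A) (hι : Function.Injective ι) (x : G → A)
    (hx1 : x 1 = 1)
    (hcomm : ∀ (σ : G) (s : S), x σ * ι s = ι (σ • s) * x σ)
    (hmul : ∀ σ τ : G, x σ * x τ = ι (f σ τ) * x (σ * τ))
    (hbasis : ∀ a : A, ∃! c : G → S, a = ∑ σ : G, ι (c σ) * x σ) :
    ∃ I : AddSubgroup A,
      (∀ a : A, a ∈ I ↔ ∃ c : G → S,
        (∀ σ : G, c σ ∈ sInf {M : Ideal S | M.IsMaximal ∧ f σ σ⁻¹ ∉ M}) ∧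
        a = ∑ σ : G, ι (c σ) * x σ) ∧
      (∀ a ∈ I, ∀ r : A, r * a ∈ I ∧ a * r ∈ I) := by
  classical
  set J : G → Ideal S := fun σ => sInf {M : Ideal S | M.IsMaximal ∧ f σ σ⁻¹ ∉ M} with hJ
  -- characterization: if f(g,g⁻¹) ∉ M (M an ideal) then f(g,γ) ∉ M for all γ
  have L1 : ∀ (M : Ideal S) (g : G), f g g⁻¹ ∉ M → ∀ γ : G, f g γ ∉ M := by
    intro M g hg γ hγ
    have h := hcoc g g⁻¹ (g * γ)
    rw [mul_inv_cancel, hnorm₁, mul_one, inv_mul_cancel_left] at h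
    exact hg (h ▸ Ideal.mul_mem_left M _ hγ)
  -- left multiplication lemma
  have Lleft : ∀ (τ σ : G) (s : S), s ∈ J σ → (τ • s) * f τ σ ∈ J (τ * σ) := by
    intro τ σ s hs
    rw [hJ, Submodule.mem_sInf]
    rintro M ⟨hMmax, hMf⟩
    haveI := hMmax
    by_cases hfM : f τ σ ∈ M
    · exact Ideal.mul_mem_left M _ hfM
    · have h1 : f (τ * σ) σ⁻¹ ∉ M := L1 M (τ * σ) hMf σ⁻¹
      have hco := hcoc τ σ σ⁻¹
      rw [mul_inv_cancel, hnorm₂, mul_one] at hco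
      have h2 : τ • f σ σ⁻¹ ∉ M := by
        intro h
        rcases hMmax.isPrime.mem_or_mem (hco ▸ h) with h' | h'
        exacts [hfM h', h1 h']
      set e : S ≃+* S := MulSemiringAction.toRingAut G S τ with he
      have hN : (Ideal.comap (e : S →+* S) M).IsMaximal :=
        Ideal.comap_isMaximal_of_surjective _ e.surjective
      have hsN : s ∈ Ideal.comap (e : S →+* S) M := by
        rw [hJ, Submodule.mem_sInf] at hs
        refine hs _ ⟨hN, ?_⟩
        simpa [he, Ideal.mem_comap] using h2
      have : τ • s ∈ M := by simpa [he, Ideal.mem_comap] using hsN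
      exact Ideal.mul_mem_right _ M this
  -- right multiplication lemma
  have Lright : ∀ (σ τ : G) (s : S), s ∈ J σ → s * f σ τ ∈ J (σ * τ) := by
    intro σ τ s hs
    rw [hJ, Submodule.mem_sInf]
    rintro M ⟨hMmax, hMf⟩
    haveI := hMmax
    by_cases hfM : f σ τ ∈ M
    · exact Ideal.mul_mem_left M _ hfM
    · have h1 : f (σ * τ) (τ⁻¹ * σ⁻¹) ∉ M := by
        have := L1 M (σ * τ) (by simpa [mul_inv_rev] using hMf) (τ⁻¹ * σ⁻¹)
        exact this
      have hco := hcoc σ τ (τ⁻¹ * σ⁻¹)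
      rw [mul_inv_cancel_left] at hco
      have h2 : f σ σ⁻¹ ∉ M := by
        intro h
        have : f σ τ * f (σ * τ) (τ⁻¹ * σ⁻¹) ∈ M := hco ▸ Ideal.mul_mem_left M _ h
        rcases hMmax.isPrime.mem_or_mem this with h' | h'
        exacts [hfM h', h1 h']
      have hsM : s ∈ M := by
        rw [hJ, Submodule.mem_sInf] at hs
        exact hs _ ⟨hMmax, h2⟩
      exact Ideal.mul_mem_right _ M hsM
  -- the additive subgroup
  refine ⟨{ carrier := {a : A | ∃ c : G → S, (∀ σ : G, c σ ∈ J σ) ∧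
              a = ∑ σ : G, ι (c σ) * x σ}
            zero_mem' := ⟨0, fun σ => (J σ).zero_mem, by simp⟩
            add_mem' := ?_
            neg_mem' := ?_ }, ?_, ?_⟩
  · rintro a b ⟨c, hc, rfl⟩ ⟨c', hc', rfl⟩
    exact ⟨c + c', fun σ => (J σ).add_mem (hc σ) (hc' σ), by
      rw [← Finset.sum_add_distrib]
      simp [add_mul]⟩
  · rintro a ⟨c, hc, rfl⟩
    exact ⟨-c, fun σ => (J σ).neg_mem (hc σ), by
      rw [← Finset.sum_neg_distrib]
      simp [neg_mul]⟩
  · intro a; exact Iff.rfl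
  · -- closure under left and right multiplication
    have hsingle : ∀ (g : G) (s : S), s ∈ J g →
        ∃ c : G → S, (∀ σ : G, c σ ∈ J σ) ∧ ι s * x g = ∑ σ : G, ι (c σ) * x σ := by
      intro g s hsg
      refine ⟨fun h => if h = g then s else 0, fun σ => ?_, ?_⟩
      · by_cases hσ : σ = g
        · simpa [hσ] using hsg
        · simp [hσ, (J σ).zero_mem]
      · rw [Finset.sum_congr rfl (fun σ _ => ?_), Finset.sum_ite_eq' Finset.univ g
          (fun σ => ι s * x σ)]
        · simp
        · by_cases hσ : σ = g <;> simp [hσ]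
    have hterm : ∀ (τ σ : G) (dτ cσ : S), cσ ∈ J σ →
        ∃ c : G → S, (∀ g : G, c g ∈ J g) ∧
          (ι dτ * x τ) * (ι cσ * x σ) = ∑ g : G, ι (c g) * x g := by
      intro τ σ dτ cσ hcσ
      have key : (ι dτ * x τ) * (ι cσ * x σ)
          = ι (dτ * ((τ • cσ) * f τ σ)) * x (τ * σ) := by
        calc (ι dτ * x τ) * (ι cσ * x σ)
            = ι dτ * ((x τ * ι cσ) * x σ) := by rw [mul_assoc, mul_assoc]
          _ = ι dτ * (ι (τ • cσ) * (x τ * x σ)) := by rw [hcomm, mul_assoc]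
          _ = ι dτ * (ι (τ • cσ) * (ι (f τ σ) * x (τ * σ))) := by rw [hmul]
          _ = ι (dτ * ((τ • cσ) * f τ σ)) * x (τ * σ) := by
              simp only [map_mul, mul_assoc]
      rw [key]
      exact hsingle (τ * σ) _ (Ideal.mul_mem_left _ _ (Lleft τ σ cσ hcσ))
    have htermR : ∀ (σ τ : G) (cσ dτ : S), cσ ∈ J σ →
        ∃ c : G → S, (∀ g : G, c g ∈ J g) ∧
          (ι cσ * x σ) * (ι dτ * x τ) = ∑ g : G, ι (c g) * x g := by
      intro σ τ cσ dτ hcσ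
      have key : (ι cσ * x σ) * (ι dτ * x τ)
          = ι (cσ * (σ • dτ) * f σ τ) * x (σ * τ) := by
        calc (ι cσ * x σ) * (ι dτ * x τ)
            = ι cσ * ((x σ * ι dτ) * x τ) := by rw [mul_assoc, mul_assoc]
          _ = ι cσ * (ι (σ • dτ) * (x σ * x τ)) := by rw [hcomm, mul_assoc]
          _ = ι cσ * (ι (σ • dτ) * (ι (f σ τ) * x (σ * τ))) := by rw [hmul]
          _ = ι (cσ * (σ • dτ) * f σ τ) * x (σ * τ) := by
              simp only [map_mul, mul_assoc]
      rw [key]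
      refine hsingle (σ * τ) _ ?_
      have : cσ * (σ • dτ) ∈ J σ := Ideal.mul_mem_right _ _ hcσ
      exact Lright σ τ _ this
    rintro a ⟨c, hc, rfl⟩ r
    obtain ⟨d, hdr, -⟩ := hbasis r
    constructor
    · have : r * (∑ σ : G, ι (c σ) * x σ)
          = ∑ τ : G, ∑ σ : G, (ι (d τ) * x τ) * (ι (c σ) * x σ) := by
        rw [hdr, Finset.sum_mul]
        exact Finset.sum_congr rfl fun τ _ => Finset.mul_sum _ _ _
      rw [this]
      refine AddSubgroup.sum_mem _ fun τ _ => AddSubgroup.sum_mem _ fun σ _ => ?_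
      exact hterm τ σ (d τ) (c σ) (hc σ)
    · have : (∑ σ : G, ι (c σ) * x σ) * r
          = ∑ σ : G, ∑ τ : G, (ι (c σ) * x σ) * (ι (d τ) * x τ) := by
        rw [hdr, Finset.sum_mul]
        exact Finset.sum_congr rfl fun σ _ => Finset.mul_sum _ _ _
      rw [this]
      refine AddSubgroup.sum_mem _ fun σ _ => AddSubgroup.sum_mem _ fun τ _ => ?_
      exact htermR σ τ (c σ) (d τ) (hc σ)
end

section
/- Let f, g: G × G → K^× be two normalized 2-cocycles with values in S \ {0} that are cohomologous over S, i.e. there exist c_σ ∈ U(S) with g(σ,τ) = c_σ σ(c_τ) c_{στ}⁻¹ f(σ,τ) for all σ,τ. Then the subgroup H and the partial order ≤ on G/H determined by f coincide with those determined by g. -/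
/-- Cocycles cohomologous over `S` determine the same subgroup `H` and the same
partial order on `G/H`. -/
theorem cohomologous_same_graph {S : Type*} [CommRing S] [IsDomain S] {G : Type*}
    [Group G] [Finite G] [MulSemiringAction G S] (f g : G → G → S)
    (hfne : ∀ σ τ : G, f σ τ ≠ 0) (hgne : ∀ σ τ : G, g σ τ ≠ 0)
    (hfnorm₁ : ∀ σ : G, f 1 σ = 1) (hfnorm₂ : ∀ σ : G, f σ 1 = 1)
    (hgnorm₁ : ∀ σ : G, g 1 σ = 1) (hgnorm₂ : ∀ σ : G, g σ 1 = 1)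
    (hfcoc : ∀ σ τ γ : G, f σ τ * f (σ * τ) γ = (σ • f τ γ) * f σ (τ * γ))
    (hgcoc : ∀ σ τ γ : G, g σ τ * g (σ * τ) γ = (σ • g τ γ) * g σ (τ * γ))
    (c : G → Sˣ)
    (hcob : ∀ σ τ : G, g σ τ = (c σ : S) * (σ • (c τ : S)) * (↑(c (σ * τ))⁻¹ : S) * f σ τ) :
    (∀ σ : G, IsUnit (f σ σ⁻¹) ↔ IsUnit (g σ σ⁻¹)) ∧
    (∀ σ τ : G, IsUnit (f σ (σ⁻¹ * τ)) ↔ IsUnit (g σ (σ⁻¹ * τ))) := by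
  have key : ∀ σ τ : G, IsUnit (f σ τ) ↔ IsUnit (g σ τ) := by
    intro σ τ
    have hu : IsUnit ((c σ : S) * (σ • (c τ : S)) * (↑(c (σ * τ))⁻¹ : S)) := by
      refine ((c σ).isUnit.mul ?_).mul (c (σ * τ))⁻¹.isUnit
      exact (c τ).isUnit.map (MulSemiringAction.toRingHom G S σ)
    rw [hcob σ τ]
    simp [IsUnit.mul_iff, hu]
  exact ⟨fun σ => key σ σ⁻¹, fun σ τ => key σ (σ⁻¹ * τ)⟩
end

section
/- Let v be a valuation on K with value group Γ, let G = ⟨σ⟩ be a finite cyclic group of order n acting on K, and let f: G × G → K^× be a normalized 2-cocycle with values in the valuation ring of v, such that v(f(σ^i,σ)) ≤ v(π) for 1 ≤ i ≤ n−1, where v(π) is the smallest positive element of Γ. Suppose a = ∏_{i=1}^{n-1} f(σ^i,σ) satisfies: v(a) < n·v(π) implies v(a)=0 (e.g. because a lies in a subring where all positive values are ≥ n·v(π)). Then v(f(σ^{n-1},σ)) = 0, i.e. f(σ⁻¹,σ) is a unit of the valuation ring. -/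
/-- Let `v` be a (multiplicative) valuation on `K` whose value group has a largest
element `v(π) < 1` (i.e. `v(π)` is the smallest positive element additively), let
`G = ⟨σ⟩` be cyclic of order `n > 1` acting on `K`, and `f` a normalized cocycle with
values in the valuation ring. If `v(f(σ^i,σ)) ≥ v(π)` for `1 ≤ i ≤ n-1`
(additively `v(f(σ^i,σ)) ≤ v(π)`), and the product `a = ∏_{i=1}^{n-1} f(σ^i,σ)`
satisfies `v(a) > v(π)^n → v(a) = 1` (additively `v(a) < n·v(π) → v(a) = 0`), then
`v(f(σ^{n-1},σ)) = 1`, i.e. `f(σ⁻¹,σ)` is a unit of the valuation ring. -/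
theorem unit_of_product_value {K : Type*} [Field K] {Γ : Type*}
    [LinearOrderedCommGroupWithZero Γ] (v : Valuation K Γ)
    {G : Type*} [Group G] [MulSemiringAction G K] (σ : G) (n : ℕ) (hn : 1 < n)
    (hord : orderOf σ = n) (hgen : ∀ g : G, g ∈ Subgroup.zpowers σ)
    (f : G → G → K)
    (hne : ∀ a b : G, f a b ≠ 0)
    (hnorm₁ : ∀ a : G, f 1 a = 1) (hnorm₂ : ∀ a : G, f a 1 = 1)
    (hcoc : ∀ a b c : G, f a b * f (a * b) c = (a • f b c) * f a (b * c))
    (hS : ∀ a b : G, v (f a b) ≤ 1)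
    (π : K) (hπ0 : π ≠ 0) (hπ : v π < 1) (hmin : ∀ y : K, v y < 1 → v y ≤ v π)
    (hle : ∀ i : ℕ, 1 ≤ i → i ≤ n - 1 → v π ≤ v (f (σ ^ i) σ))
    (ha : (v π) ^ n < v (∏ i ∈ Finset.Icc 1 (n - 1), f (σ ^ i) σ) →
      v (∏ i ∈ Finset.Icc 1 (n - 1), f (σ ^ i) σ) = 1) :
    v (f (σ ^ (n - 1)) σ) = 1 := by
  have hπv : (0:Γ) < v π := by
    simpa [Valuation.pos_iff] using hπ0
  have hva : v (∏ i ∈ Finset.Icc 1 (n - 1), f (σ ^ i) σ)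
      = ∏ i ∈ Finset.Icc 1 (n - 1), v (f (σ ^ i) σ) := map_prod v _ _
  have hcard : (Finset.Icc 1 (n - 1)).card = n - 1 := by
    simp [Nat.card_Icc]
  have hlow : (v π) ^ (n - 1) ≤ v (∏ i ∈ Finset.Icc 1 (n - 1), f (σ ^ i) σ) := by
    rw [hva]
    calc (v π) ^ (n - 1) = ∏ _i ∈ Finset.Icc 1 (n - 1), v π := by
          rw [Finset.prod_const, hcard]
    _ ≤ _ := Finset.prod_le_prod' fun i hi => by
      obtain ⟨h1, h2⟩ := Finset.mem_Icc.mp hi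
      exact hle i h1 h2
  have hpow : (v π) ^ n < (v π) ^ (n - 1) := by
    have := pow_lt_pow_right_of_lt_one₀ hπv hπ (show n - 1 < n by omega)
    exact this
  have h1 : v (∏ i ∈ Finset.Icc 1 (n - 1), f (σ ^ i) σ) = 1 :=
    ha (lt_of_lt_of_le hpow hlow)
  have hmem : n - 1 ∈ Finset.Icc 1 (n - 1) := Finset.mem_Icc.mpr ⟨by omega, le_rfl⟩
  have hsplit := Finset.mul_prod_erase (Finset.Icc 1 (n - 1))
    (fun i => v (f (σ ^ i) σ)) hmem
  have hrest : ∏ i ∈ (Finset.Icc 1 (n - 1)).erase (n - 1), v (f (σ ^ i) σ) ≤ 1 :=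
    Finset.prod_le_one' fun i _ => hS _ _
  have hge : (1:Γ) ≤ v (f (σ ^ (n - 1)) σ) := by
    calc (1:Γ) = v (∏ i ∈ Finset.Icc 1 (n - 1), f (σ ^ i) σ) := h1.symm
    _ = v (f (σ ^ (n - 1)) σ) * ∏ i ∈ (Finset.Icc 1 (n - 1)).erase (n - 1), v (f (σ ^ i) σ) := by
        rw [hva, ← hsplit]
    _ ≤ v (f (σ ^ (n - 1)) σ) * 1 := mul_le_mul_right hrest _
    _ = v (f (σ ^ (n - 1)) σ) := mul_one _
  exact le_antisymm (hS _ _) hge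
end

section
/- Suppose there exists a set of right coset representatives σ₁,…,σ_r of G^Z in G such that f(σ_i,σ_i⁻¹) ∉ N for all i, where N is a maximal ideal of S and G^Z = {σ ∈ G | σ(N) = N}. Then for every γ ∈ G there exist d ∈ G^Z and an index i with γ = dσ_i and f(d⁻¹γ, γ⁻¹d) ∉ N. Consequently, the map ψ_N: G^Z/H_N → (equivalence classes of G/H under ≤_N) sending dH_N to [d]_N is surjective, i.e. a graph isomorphism onto Gr(f^N). -/
/-- Suppose `σ₁,…,σ_r` are right coset representatives of the decomposition group
`G^Z = {σ | σ(N) = N}` of the maximal ideal `N` in `G`, with `f(σᵢ,σᵢ⁻¹) ∉ N` for all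
`i`. Then every `γ ∈ G` can be written `γ = d·σᵢ` with `d ∈ G^Z` and
`f(d⁻¹γ, γ⁻¹d) ∉ N`; consequently the embedding `ψ_N : dH_N ↦ [d]_N` of `Gr(f_N)`
into `Gr(f^N)` is surjective (`[d]_N = [γ]_N`, i.e. `f(d,d⁻¹γ) ∉ N` and
`f(γ,γ⁻¹d) ∉ N`), hence a graph isomorphism. -/
theorem nice_coset_reps_graph_iso {S : Type*} [CommRing S] [IsDomain S] {G : Type*}
    [Group G] [Finite G] [MulSemiringAction G S] (f : G → G → S)
    (hne : ∀ σ τ : G, f σ τ ≠ 0)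
    (hnorm₁ : ∀ σ : G, f 1 σ = 1) (hnorm₂ : ∀ σ : G, f σ 1 = 1)
    (hcoc : ∀ σ τ γ : G, f σ τ * f (σ * τ) γ = (σ • f τ γ) * f σ (τ * γ))
    (N : Ideal S) (hN : N.IsMaximal)
    (r : ℕ) (σs : Fin r → G)
    -- σ₁,…,σ_r are right coset representatives of G^Z in G
    (hreps : ∀ γ : G, ∃ i : Fin r, ∀ s : S, s ∈ N ↔ (γ * (σs i)⁻¹) • s ∈ N)
    (hnice : ∀ i : Fin r, f (σs i) (σs i)⁻¹ ∉ N) :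
    ∀ γ : G, ∃ d : G,
      (∀ s : S, s ∈ N ↔ d • s ∈ N) ∧              -- d ∈ G^Z
      (∃ i : Fin r, γ = d * σs i) ∧
      f (d⁻¹ * γ) (γ⁻¹ * d) ∉ N ∧
      f d (d⁻¹ * γ) ∉ N ∧ f γ (γ⁻¹ * d) ∉ N := by  -- [d]_N = [γ]_N
  intro γ
  obtain ⟨i, hi⟩ := hreps γ
  refine ⟨γ * (σs i)⁻¹, hi, ⟨i, by group⟩, ?_, ?_, ?_⟩
  · have h1 : (γ * (σs i)⁻¹)⁻¹ * γ = σs i := by group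
    have h2 : γ⁻¹ * (γ * (σs i)⁻¹) = (σs i)⁻¹ := by group
    rw [h1, h2]; exact hnice i
  all_goals {
    have h1 : (γ * (σs i)⁻¹)⁻¹ * γ = σs i := by group
    have h2 : γ⁻¹ * (γ * (σs i)⁻¹) = (σs i)⁻¹ := by group
    have hc := hcoc (γ * (σs i)⁻¹) ((γ * (σs i)⁻¹)⁻¹ * γ) (γ⁻¹ * (γ * (σs i)⁻¹))
    rw [h1, h2] at hc
    have e1 : γ * (σs i)⁻¹ * σs i = γ := by group
    have e2 : σs i * (σs i)⁻¹ = (1 : G) := by group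
    rw [e1, e2, hnorm₂, mul_one] at hc
    have hnot : f (γ * (σs i)⁻¹) (σs i) * f γ (σs i)⁻¹ ∉ N := by
      rw [hc]
      intro hmem
      exact hnice i ((hi _).mpr hmem)
    have hprime := hN.isPrime
    simp only [h1, h2]
    intro hmem
    exact hnot (by first | exact Ideal.mul_mem_right _ _ hmem | exact Ideal.mul_mem_left _ _ hmem)
  }
end

section
/- Let N, M be maximal ideals of S and suppose there exist right coset representatives σ₁,…,σ_r of G^Z(N) in G with f(σ_i,σ_i⁻¹) ∉ N for all i. Choose σ among the σ_i with σ(M) = N. Then the map [γ]_M ↦ [σγ]_N is a well-defined isomorphism of partially ordered sets from Gr(f^M) to Gr(f^N); that is, [γ₁]_M ≤_M [γ₂]_M if and only if [σγ₁]_N ≤_N [σγ₂]_N, and the map is a bijection. -/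
/-- Let `N, M` be maximal ideals of `S`, with a set of right coset representatives
`σ₁,…,σ_r` of `G^Z(N)` in `G` satisfying `f(σᵢ,σᵢ⁻¹) ∉ N`, and let `σ` be one of
the `σᵢ` with `σ(M) = N`. Then `[γ]_M ↦ [σγ]_N` is a well-defined isomorphism of
posets from `Gr(f^M)` to `Gr(f^N)`: the relation `≤_M` between `γ₁, γ₂` holds iff
`≤_N` holds between `σγ₁, σγ₂` (which gives well-definedness, injectivity on
classes, and order-preservation in both directions), and the map is surjective on
equivalence classes. -/
theorem graph_iso_between_maximal_ideals {S : Type*} [CommRing S] [IsDomain S]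
    {G : Type*} [Group G] [Finite G] [MulSemiringAction G S] (f : G → G → S)
    (hne : ∀ σ τ : G, f σ τ ≠ 0)
    (hnorm₁ : ∀ σ : G, f 1 σ = 1) (hnorm₂ : ∀ σ : G, f σ 1 = 1)
    (hcoc : ∀ σ τ γ : G, f σ τ * f (σ * τ) γ = (σ • f τ γ) * f σ (τ * γ))
    (N M : Ideal S) (hN : N.IsMaximal) (hM : M.IsMaximal)
    (r : ℕ) (σs : Fin r → G)
    (hreps : ∀ γ : G, ∃ i : Fin r, ∀ s : S, s ∈ N ↔ (γ * (σs i)⁻¹) • s ∈ N)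
    (hnice : ∀ i : Fin r, f (σs i) (σs i)⁻¹ ∉ N)
    (σ : G) (hσ : ∃ i : Fin r, σ = σs i)
    (hσM : ∀ s : S, s ∈ M ↔ σ • s ∈ N) :
    (∀ γ₁ γ₂ : G,
      (f γ₁ (γ₁⁻¹ * γ₂) ∉ M ↔ f (σ * γ₁) ((σ * γ₁)⁻¹ * (σ * γ₂)) ∉ N)) ∧
    (∀ δ : G, ∃ γ : G,
      f (σ * γ) ((σ * γ)⁻¹ * δ) ∉ N ∧ f δ (δ⁻¹ * (σ * γ)) ∉ N) := by
  have hprime : N.IsPrime := hN.isPrime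
  have h1N : (1 : S) ∉ N := fun h => hN.ne_top (N.eq_top_iff_one.mpr h)
  -- key: f σ γ ∉ N for all γ
  have hσσ : f σ σ⁻¹ ∉ N := by
    obtain ⟨i, hi⟩ := hσ
    rw [hi]; exact hnice i
  have key : ∀ γ : G, f σ γ ∉ N := by
    intro γ hmem
    apply hσσ
    have h := hcoc σ σ⁻¹ (σ * γ)
    simp only [mul_inv_cancel, hnorm₁, mul_one, inv_mul_cancel_left] at h
    rw [h]
    exact N.mul_mem_left _ hmem
  constructor
  · intro γ₁ γ₂
    have hg : (σ * γ₁)⁻¹ * (σ * γ₂) = γ₁⁻¹ * γ₂ := by group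
    rw [hg]
    have h := hcoc σ γ₁ (γ₁⁻¹ * γ₂)
    rw [mul_inv_cancel_left] at h
    have hL : f σ γ₁ * f (σ * γ₁) (γ₁⁻¹ * γ₂) ∈ N ↔ f (σ * γ₁) (γ₁⁻¹ * γ₂) ∈ N := by
      rw [hprime.mul_mem_iff_mem_or_mem]
      exact ⟨fun h => h.resolve_left (key γ₁), Or.inr⟩
    have hR : (σ • f γ₁ (γ₁⁻¹ * γ₂)) * f σ γ₂ ∈ N ↔ σ • f γ₁ (γ₁⁻¹ * γ₂) ∈ N := by
      rw [hprime.mul_mem_iff_mem_or_mem]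
      exact ⟨fun h => h.resolve_right (key γ₂), Or.inl⟩
    rw [not_iff_not, hσM, ← hR, ← h, hL]
  · intro δ
    refine ⟨σ⁻¹ * δ, ?_, ?_⟩ <;>
      simp only [mul_inv_cancel_left, inv_mul_cancel, hnorm₂] <;> exact h1N
end
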